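/- arXiv:2009.05969 — 3 statements merged into one kernel-verified Lean document; each statement's English description precedes it below -/
import Mathlib

section
/- Let n ≥ r(k-1)+1 and 0 ≤ s < k. Then the equitable r-colorability defect with parameter s of the family of all k-subsets of [n] equals n - r(k-s-1). -/
open Finset

/-- `A ⊆ₛ B`: there exists `E` with `|E| ≤ s` and `A \ E ⊆ B`. -/
def subS {α : Type*} [DecidableEq α] (s : ℕ) (A B : Finset α) : Prop :=
  ∃ E : Finset α, E.card ≤ s ∧ A \ E ⊆ B

/-- `X` is an equitable partition of `G` (pairwise disjoint parts, union `G`,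
part sizes pairwise differing by at most 1). -/
def EquitableParts {ι α : Type*} [Fintype ι] [DecidableEq α]
    (G : Finset α) (X : ι → Finset α) : Prop :=
  (∀ i j, i ≠ j → Disjoint (X i) (X j)) ∧
  Finset.univ.biUnion X = G ∧
  ∀ i j, (X i).card ≤ (X j).card + 1

/-- Generalized equitable `r`-colorability defect `ecd^r(F, s)` on ground set `G`. -/
noncomputable def ecd {α : Type*} [DecidableEq α] (G : Finset α) (r s : ℕ)
    (F : Set (Finset α)) : ℕ :=
  sInf {m | ∃ X0 ⊆ G, X0.card = m ∧ ∃ X : Fin r → Finset α,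
    EquitableParts (G \ X0) X ∧ ∀ A ∈ F, ∀ i, ¬ subS s A (X i)}

/-- Equitable `r`-colorability defect (plain containment). -/
noncomputable def ecd0 {α : Type*} [DecidableEq α] (G : Finset α) (r : ℕ)
    (F : Set (Finset α)) : ℕ :=
  sInf {m | ∃ X0 ⊆ G, X0.card = m ∧ ∃ X : Fin r → Finset α,
    EquitableParts (G \ X0) X ∧ ∀ A ∈ F, ∀ i, ¬ A ⊆ X i}

/-- The family of all `k`-subsets of `[n] = {1, …, n}`. -/
def kSubsets (n k : ℕ) : Set (Finset ℕ) :=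
  {F | F ⊆ Finset.Icc 1 n ∧ F.card = k}

/-- The family `H(n,k,a,s)` of `k`-subsets `F` of `[n]` with `F ⊄ₛ {n-a+1,…,n}`. -/
def Hfam (n k a s : ℕ) : Set (Finset ℕ) :=
  {F | F ⊆ Finset.Icc 1 n ∧ F.card = k ∧ ¬ subS s F (Finset.Icc (n - a + 1) n)}

/-- The family of `t`-wide `k`-subsets of `[n]`. -/
def tWide (n k t : ℕ) : Set (Finset ℕ) :=
  {F | F ⊆ Finset.Icc 1 n ∧ F.card = k ∧
    ∀ i ∈ Finset.Icc 1 (n - t + 1), ¬ F ⊆ Finset.Icc i (i + t - 1)}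

/-- `P` is a partition of `[n]` into pairwise disjoint pieces. -/
def IsPartition (n : ℕ) (P : Finset (Finset ℕ)) : Prop :=
  (∀ p ∈ P, ∀ q ∈ P, p ≠ q → Disjoint p q) ∧ P.sup id = Finset.Icc 1 n

/-- `A` is `P`-admissible: it meets every part of `P` in at most one element. -/
def Adm (P : Finset (Finset ℕ)) (A : Finset ℕ) : Prop :=
  ∀ p ∈ P, (A ∩ p).card ≤ 1

/-!
A set `A` with `A ⊆ₛ X` has `|A| ≤ |X| + s`, so a colour class with at most `t = k - s - 1`
elements contains no `k`-set up to `s` elements; conversely `k - s` elements of a larger class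
extend to a `k`-subset of `[n]` that the class contains up to `s` elements. Hence every class
has at most `t` elements, at least `n - r t` elements are left uncoloured, and `r` consecutive
blocks of length `t` attain this.
-/

section

variable {α : Type*} [DecidableEq α] {s k : ℕ} {A B X G : Finset α}

lemma card_le_card_add_of_subS (h : subS s A B) : A.card ≤ B.card + s := by
  obtain ⟨E, hE, hAE⟩ := h
  have := card_le_card hAE
  have := card_le_card_sdiff_add_card (s := A) (t := E)
  omega

lemma card_le_of_forall_not_subS (hXG : X ⊆ G) (hkG : k ≤ G.card)
    (hX : ∀ A ⊆ G, A.card = k → ¬ subS s A X) : X.card ≤ k - s - 1 := by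
  by_contra! hlarge
  obtain ⟨B, hBX, hBcard⟩ := exists_subset_card_eq (s := X) (n := k - s) (by omega)
  obtain ⟨A, hBA, hAG, hAcard⟩ :=
    exists_subsuperset_card_eq (n := k) (hBX.trans hXG) (by omega) hkG
  refine hX A hAG hAcard ⟨A \ B, ?_, ?_⟩
  · rw [card_sdiff_of_subset hBA]
    omega
  · rw [sdiff_sdiff_self_left]
    exact inter_subset_right.trans hBX

lemma EquitableParts.subset {ι : Type*} [Fintype ι] {Y : Finset α} {P : ι → Finset α}
    (h : EquitableParts Y P) (i : ι) : P i ⊆ Y :=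
  h.2.1 ▸ subset_biUnion_of_mem P (mem_univ i)

lemma EquitableParts.card_eq_sum {ι : Type*} [Fintype ι] {Y : Finset α} {P : ι → Finset α}
    (h : EquitableParts Y P) : Y.card = ∑ i, (P i).card := by
  rw [← h.2.1, card_biUnion fun i _ j _ hij => h.1 i j hij]

end

def block (t i : ℕ) : Finset ℕ := Icc (i * t + 1) ((i + 1) * t)

lemma card_block (t i : ℕ) : (block t i).card = t := by
  rw [block, Nat.card_Icc, add_mul]
  omega

lemma block_subset_Icc {t i r : ℕ} (hi : i < r) : block t i ⊆ Icc 1 (r * t) := by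
  intro x hx
  have : (i + 1) * t ≤ r * t := Nat.mul_le_mul_right t hi
  simp only [block, mem_Icc] at hx ⊢
  omega

lemma disjoint_block {t i j : ℕ} (hij : i < j) : Disjoint (block t i) (block t j) := by
  rw [disjoint_left]
  intro x hxi hxj
  have : (i + 1) * t ≤ j * t := Nat.mul_le_mul_right t hij
  simp only [block, mem_Icc] at hxi hxj
  omega

/-- The union is all of `{1, …, r t}` because the `r` disjoint blocks already have `r t`
elements. -/
lemma equitableParts_block (r t : ℕ) :
    EquitableParts (Icc 1 (r * t)) fun i : Fin r => block t i := by
  have hdisj : ∀ i j : Fin r, i ≠ j → Disjoint (block t i) (block t j) := by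
    intro i j hij
    rcases lt_or_gt_of_ne (Fin.val_ne_of_ne hij) with h | h
    · exact disjoint_block h
    · exact (disjoint_block h).symm
  refine ⟨hdisj, ?_, fun i j => by simp only [card_block]; omega⟩
  refine eq_of_subset_of_card_le (biUnion_subset.2 fun i _ => block_subset_Icc i.isLt) ?_
  rw [card_biUnion fun i _ j _ hij => hdisj i j hij]
  simp [card_block]

theorem stmt0_general (n r k s : ℕ)
    (hn : r * (k - 1) + 1 ≤ n) (hs : s < k) :
    ecd (Finset.Icc 1 n) r s (kSubsets n k) = n - r * (k - s - 1) := by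
  set t := k - s - 1
  have hrt : r * t ≤ n := by
    have : r * t ≤ r * (k - 1) := Nat.mul_le_mul_left r (by omega)
    omega
  refine IsLeast.csInf_eq ⟨?_, ?_⟩
  · have hrest : Icc 1 n \ Icc (r * t + 1) n = Icc 1 (r * t) := by
      ext x
      simp only [mem_sdiff, mem_Icc]
      omega
    refine ⟨Icc (r * t + 1) n, Icc_subset_Icc_left (by omega), by rw [Nat.card_Icc]; omega,
      fun i => block t i, hrest ▸ equitableParts_block r t, ?_⟩
    rintro A ⟨-, hAk⟩ i hA
    have := card_le_card_add_of_subS hA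
    rw [card_block] at this
    omega
  · rintro m ⟨X0, hX0, rfl, X, hX, hfree⟩
    have hparts (i : Fin r) : (X i).card ≤ t := by
      have hkn : k ≤ (Icc 1 n).card := by
        have := Nat.le_mul_of_pos_left (k - 1) i.pos
        rw [Nat.card_Icc]
        omega
      exact card_le_of_forall_not_subS ((hX.subset i).trans sdiff_subset) hkn
        fun A hAG hAk => hfree A ⟨hAG, hAk⟩ i
    have hsum := hX.card_eq_sum
    have hle := sum_le_card_nsmul univ (fun i => (X i).card) t fun i _ => hparts i
    rw [card_sdiff_of_subset hX0, Nat.card_Icc] at hsum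
    simp only [card_univ, Fintype.card_fin, smul_eq_mul] at hle
    omega

theorem stmt0 (n r k s : ℕ) (hn1 : 1 ≤ n) (hr : 2 ≤ r)
    (hn : r * (k - 1) + 1 ≤ n) (hs : s < k) :
    ecd (Finset.Icc 1 n) r s (kSubsets n k) = n - r * (k - s - 1) :=
  stmt0_general n r k s hn hs
end

section
/- Let n ≥ rk, k,r ≥ 2, 0 ≤ s < k, n > a+s, and k-s ≤ a ≤ r(k-s)-2. Then ecd^r(H(n,k,a,s), s) = n - r(k-s-1) - ⌊a/(k-s)⌋. -/
open Finset

/-!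
Write `t = k - s` and `A = {n-a+1, …, n}`. A part with fewer than `t` elements cannot
`s`-contain a `k`-set, while a part with at least `t` elements that is not inside `A` does
`s`-contain a member of `H(n,k,a,s)`: take `t` of its elements, one of them some `x ∉ A`, add `s`
elements outside `A` other than `x`, and pad to `k` elements. So in a partition as in the definition of `ecd`, all parts of
size `≥ t` lie in `A`. If every part is that large, at most `a ≤ r(t-1) + ⌊a/t⌋` points are
coloured; otherwise equitability makes the large parts have exactly `t` elements, so there are at
most `⌊a/t⌋` of them and again at most `r(t-1) + ⌊a/t⌋` points are coloured. Conversely,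
`⌊a/t⌋` consecutive blocks of size `t` at the top of `[n]`, followed by `r - ⌊a/t⌋` blocks of
size `t - 1`, form such a partition.
-/

variable {α : Type*} [DecidableEq α]

theorem subS_iff_card_sdiff_le {s : ℕ} {F B : Finset α} : subS s F B ↔ #(F \ B) ≤ s :=
  ⟨fun ⟨E, hE, hFE⟩ => (card_le_card fun x hx => by_contra fun hxE =>
      (mem_sdiff.1 hx).2 (hFE (mem_sdiff.2 ⟨(mem_sdiff.1 hx).1, hxE⟩))).trans hE,
    fun h => ⟨F \ B, h, by simp⟩⟩

theorem subS.mono {s : ℕ} {F B C : Finset α} (h : subS s F B) (hBC : B ⊆ C) : subS s F C :=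
  let ⟨E, hE, hFE⟩ := h; ⟨E, hE, hFE.trans hBC⟩

theorem not_subS_of_card_add_lt {s : ℕ} {F B : Finset α} (h : #B + s < #F) : ¬ subS s F B := by
  rw [subS_iff_card_sdiff_le]
  have := card_le_card_sdiff_add_card (s := F) (t := B)
  omega

theorem exists_card_eq_not_subS_subS {G A B : Finset α} {k s : ℕ} (hsk : s < k)
    (hkG : k ≤ #G) (hsA : s < #(G \ A)) (hBG : B ⊆ G) (hBA : ¬ B ⊆ A) (hB : k - s ≤ #B) :
    ∃ F ⊆ G, #F = k ∧ ¬ subS s F A ∧ subS s F B := by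
  obtain ⟨x, hxB, hxA⟩ := not_subset.1 hBA
  obtain ⟨T, hxT, hTB, hT⟩ :=
    exists_subsuperset_card_eq (singleton_subset_iff.2 hxB) (by rw [card_singleton]; omega) hB
  obtain ⟨W, hxW, hWGA, hW⟩ := exists_subsuperset_card_eq
    (singleton_subset_iff.2 (mem_sdiff.2 ⟨hBG hxB, hxA⟩)) (by simp) hsA
  have hTW : #(T ∪ W) ≤ k := by
    have hx : 1 ≤ #(T ∩ W) :=
      card_pos.2 ⟨x, mem_inter.2 ⟨singleton_subset_iff.1 hxT, singleton_subset_iff.1 hxW⟩⟩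
    have := card_union_add_card_inter T W
    omega
  obtain ⟨F, hTWF, hFG, hF⟩ := exists_subsuperset_card_eq
    (union_subset (hTB.trans hBG) (hWGA.trans sdiff_subset)) hTW hkG
  refine ⟨F, hFG, hF, ?_, ?_⟩
  · rw [subS_iff_card_sdiff_le, not_le]
    calc s < #W := by omega
      _ ≤ #(F \ A) := card_le_card fun y hy =>
        mem_sdiff.2 ⟨hTWF (mem_union_right _ hy), (mem_sdiff.1 (hWGA hy)).2⟩
  · rw [subS_iff_card_sdiff_le]
    have hTFB : #T ≤ #(F ∩ B) := card_le_card (subset_inter (subset_union_left.trans hTWF) hTB)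
    have := card_sdiff_add_card_inter F B
    omega

section TopBlocks

variable (f : ℕ → ℕ) (m : ℕ)

def topBlock (i : ℕ) : Finset ℕ := Ioc (m - f (i + 1)) (m - f i)

variable {f}

theorem card_topBlock (hf : Monotone f) {i : ℕ} (hi : f (i + 1) ≤ m) :
    #(topBlock f m i) = f (i + 1) - f i := by
  have := hf (Nat.le_add_right i 1)
  rw [topBlock, Nat.card_Ioc]
  omega

theorem topBlock_subset_Ioc (i : ℕ) : topBlock f m i ⊆ Ioc (m - f (i + 1)) m :=
  Ioc_subset_Ioc_right tsub_le_self

theorem disjoint_topBlock (hf : Monotone f) {i j : ℕ} (hij : i < j) :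
    Disjoint (topBlock f m i) (topBlock f m j) := by
  have := hf (show i + 1 ≤ j from hij)
  rw [disjoint_left]
  intro x hxi hxj
  simp only [topBlock, mem_Ioc] at hxi hxj
  omega

theorem biUnion_range_topBlock (hf : Monotone f) (hf0 : f 0 = 0) (r : ℕ) :
    (range r).biUnion (topBlock f m) = Ioc (m - f r) m := by
  induction r with
  | zero => simp [hf0]
  | succ r ih =>
    rw [range_add_one, biUnion_insert, ih, topBlock,
      Ioc_union_Ioc_eq_Ioc (by have := hf (Nat.le_add_right r 1); omega) tsub_le_self]

end TopBlocks

theorem le_mul_pred_add_div {a r t : ℕ} (h : a < r * t) : a ≤ r * (t - 1) + a / t := by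
  obtain ⟨p, rfl⟩ : ∃ p, t = p + 1 :=
    Nat.exists_eq_add_one.2 (Nat.pos_of_ne_zero (by rintro rfl; simp at h))
  have hq : a / (p + 1) + 1 ≤ r := Nat.div_lt_of_lt_mul (by rwa [mul_comm])
  have := Nat.div_add_mod a (p + 1)
  have := Nat.mod_lt a p.succ_pos
  rw [Nat.add_sub_cancel]
  nlinarith [Nat.mul_le_mul_left p hq]

theorem sum_le_mul_pred_add_div {ι : Type*} [Fintype ι] (y : ι → ℕ) {t a : ℕ}
    (hy : ∀ i j, y i ≤ y j + 1) (hbig : ∑ i with t ≤ y i, y i ≤ a)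
    (ha : a ≤ Fintype.card ι * (t - 1) + a / t) :
    ∑ i, y i ≤ Fintype.card ι * (t - 1) + a / t := by
  by_cases hall : ∀ i, t ≤ y i
  · rw [filter_true_of_mem fun i _ => hall i] at hbig
    exact hbig.trans ha
  obtain ⟨j, hj⟩ := not_forall.1 hall
  -- a part below `t` caps every part at `t` by equitability
  have hbig' : #{i | t ≤ y i} ≤ a / t := by
    rw [Nat.le_div_iff_mul_le (by omega)]
    have := card_nsmul_le_sum {i | t ≤ y i} y t fun i hi => (mem_filter.1 hi).2
    rw [smul_eq_mul] at this
    exact this.trans hbig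
  calc ∑ i, y i ≤ ∑ i, (t - 1 + if t ≤ y i then 1 else 0) :=
        sum_le_sum fun i _ => by have := hy i j; split_ifs <;> omega
    _ = Fintype.card ι * (t - 1) + #{i | t ≤ y i} := by
        rw [sum_add_distrib, sum_const, card_univ, smul_eq_mul, sum_boole, Nat.cast_id]
    _ ≤ _ := Nat.add_le_add_left hbig' _

namespace EquitableParts

variable {ι : Type*} [Fintype ι] {G : Finset α} {X : ι → Finset α}

theorem subset_s2 (h : EquitableParts G X) (i : ι) : X i ⊆ G :=
  h.2.1 ▸ subset_biUnion_of_mem X (mem_univ i)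

theorem sum_card (h : EquitableParts G X) : ∑ i, #(X i) = #G := by
  rw [← h.2.1, card_biUnion fun i _ j _ hij => h.1 i j hij]

end EquitableParts

theorem ecd_eq {G : Finset α} {r s m : ℕ} {𝓕 : Set (Finset α)}
    (hwit : ∃ X0 ⊆ G, #X0 = m ∧ ∃ X : Fin r → Finset α,
      EquitableParts (G \ X0) X ∧ ∀ A ∈ 𝓕, ∀ i, ¬ subS s A (X i))
    (hmin : ∀ X0 ⊆ G, ∀ X : Fin r → Finset α, EquitableParts (G \ X0) X →
      (∀ A ∈ 𝓕, ∀ i, ¬ subS s A (X i)) → m ≤ #X0) :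
    ecd G r s 𝓕 = m :=
  le_antisymm (Nat.sInf_le hwit)
    (le_csInf ⟨m, hwit⟩ fun _ ⟨X0, hX0, hc, X, hX, h𝓕⟩ => hc ▸ hmin X0 hX0 X hX h𝓕)

theorem card_le_of_forall_not_subS_Hfam {n r k s a : ℕ} (hn : r * k ≤ n) (hs : s < k)
    (hna : a + s < n) (ha : a ≤ r * (k - s - 1) + a / (k - s)) {Z : Finset ℕ}
    (hZ : Z ⊆ Icc 1 n) {Y : Fin r → Finset ℕ} (hY : EquitableParts Z Y)
    (hfree : ∀ F ∈ Hfam n k a s, ∀ i, ¬ subS s F (Y i)) :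
    #Z ≤ r * (k - s - 1) + a / (k - s) := by
  set A := Icc (n - a + 1) n
  have hAG : A ⊆ Icc 1 n := Icc_subset_Icc (by omega) le_rfl
  have hlarge : ∀ i, k - s ≤ #(Y i) → Y i ⊆ A := by
    intro i hi
    by_contra hYA
    have hkn : k ≤ n := (Nat.le_mul_of_pos_left k (Fin.pos i)).trans hn
    obtain ⟨F, hFG, hF, hFA, hFY⟩ := exists_card_eq_not_subS_subS hs
      (by rwa [Nat.card_Icc, Nat.add_sub_cancel])
      (by rw [card_sdiff_of_subset hAG]; simp only [A, Nat.card_Icc]; omega)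
      ((hY.subset_s2 i).trans hZ) hYA hi
    exact hfree F ⟨hFG, hF, hFA⟩ i hFY
  have hbig : ∑ i with k - s ≤ #(Y i), #(Y i) ≤ a := by
    rw [← card_biUnion fun i _ j _ hij => hY.1 i j hij]
    calc _ ≤ #A := card_le_card (biUnion_subset.2 fun i hi => hlarge i (mem_filter.1 hi).2)
      _ = a := by simp only [A, Nat.card_Icc]; omega
  rw [← hY.sum_card]
  have := sum_le_mul_pred_add_div (fun i => #(Y i)) (fun i j => hY.2.2 i j) hbig
    (by rwa [Fintype.card_fin])
  rwa [Fintype.card_fin] at this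

theorem exists_equitableParts_forall_not_subS_Hfam {n r k s a : ℕ} (hs : s < k)
    (hq : a / (k - s) ≤ r) (htot : r * (k - s - 1) + a / (k - s) ≤ n) :
    ∃ X : Fin r → Finset ℕ, EquitableParts (Ioc (n - (r * (k - s - 1) + a / (k - s))) n) X ∧
      ∀ F ∈ Hfam n k a s, ∀ i, ¬ subS s F (X i) := by
  set p := k - s - 1
  set q := a / (k - s)
  -- the first `q` blocks have `p + 1 = k - s` elements, the others `p`
  set f : ℕ → ℕ := fun i => i * p + min i q
  have hf : Monotone f := fun i j hij =>
    Nat.add_le_add (Nat.mul_le_mul_right p hij) (min_le_min_right q hij)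
  have hfr : f r = r * p + q := by simp [f, hq]
  have hcard : ∀ i : Fin r, #(topBlock f n i) = p + if (i : ℕ) < q then 1 else 0 := by
    intro i
    rw [card_topBlock n hf ((hf i.isLt).trans (hfr ▸ htot))]
    simp only [f, add_mul, one_mul]
    split_ifs <;> omega
  refine ⟨fun i => topBlock f n i, ⟨fun i j hij => ?_, ?_, fun i j => ?_⟩, fun F hF i => ?_⟩
  · rcases lt_or_gt_of_ne (Fin.val_ne_of_ne hij) with h | h
    exacts [disjoint_topBlock n hf h, (disjoint_topBlock n hf h).symm]
  · rw [← image_biUnion, image_fin_univ, biUnion_range_topBlock n hf (by simp [f]), hfr]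
  · rw [hcard i, hcard j]
    split_ifs <;> omega
  by_cases hiq : (i : ℕ) < q
  · have hqa : q * p + q ≤ a :=
      calc q * p + q = q * (k - s) := by rw [show k - s = p + 1 by omega, mul_add_one]
        _ ≤ a := Nat.div_mul_le_self a (k - s)
    have hfa : f (i + 1) ≤ a := by
      have := Nat.mul_le_mul_right p (show (i : ℕ) + 1 ≤ q from hiq)
      simp only [f]
      omega
    intro hFX
    refine hF.2.2 (hFX.mono ((topBlock_subset_Ioc n i).trans ?_))
    rw [Icc_add_one_left_eq_Ioc]
    exact Ioc_subset_Ioc_left (by omega)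
  · exact not_subS_of_card_add_lt (by rw [hcard i, if_neg hiq, hF.2.1]; omega)

theorem stmt2_general (n r k s a : ℕ) (hn : r * k ≤ n)
    (hs : s < k) (hna : a + s < n) (ha2 : a ≤ r * (k - s) - 2) :
    ecd (Finset.Icc 1 n) r s (Hfam n k a s) = n - r * (k - s - 1) - a / (k - s) := by
  have ha : a = 0 ∨ a < r * (k - s) := by omega
  have hq : a / (k - s) ≤ r := Nat.div_le_of_le_mul (by rw [mul_comm]; omega)
  have htot : r * (k - s - 1) + a / (k - s) ≤ n := by
    have := Nat.mul_le_mul_left r (show k - s - 1 + 1 ≤ k by omega)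
    rw [mul_add_one] at this
    omega
  have hsize : a ≤ r * (k - s - 1) + a / (k - s) := by
    rcases ha with rfl | ha
    exacts [Nat.zero_le _, le_mul_pred_add_div ha]
  obtain ⟨X, hX, hfree⟩ := exists_equitableParts_forall_not_subS_Hfam (n := n) hs hq htot
  refine ecd_eq ⟨Icc 1 (n - (r * (k - s - 1) + a / (k - s))), Icc_subset_Icc le_rfl (by omega),
    by rw [Nat.card_Icc]; omega, X, ?_, hfree⟩ fun X0 hX0 Y hY hfreeY => ?_
  · convert hX using 1
    ext x
    simp only [mem_sdiff, mem_Icc, mem_Ioc]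
    omega
  · have := card_le_of_forall_not_subS_Hfam hn hs hna hsize sdiff_subset hY hfreeY
    rw [card_sdiff_of_subset hX0, Nat.card_Icc] at this
    omega

theorem stmt2 (n r k s a : ℕ) (hk : 2 ≤ k) (hr : 2 ≤ r) (hn : r * k ≤ n)
    (hs : s < k) (hna : a + s < n) (ha1 : k - s ≤ a) (ha2 : a ≤ r * (k - s) - 2) :
    ecd (Finset.Icc 1 n) r s (Hfam n k a s) = n - r * (k - s - 1) - a / (k - s) :=
  stmt2_general n r k s a hn hs hna ha2
end

section
/- Let n ≥ r(k-1)+1, 0 ≤ s < k, and let P = {P_1,...,P_l} be a partition of [n] with |P_i| ≤ r for all i. Then the pair (all k-subsets of [n], P) is s-good: for any P-admissible subset A of [n] (i.e., |A ∩ P_i| ≤ 1 for all i) such that some k-subset F satisfies F ⊆_s A, there exists a P-admissible k-subset F' with F' ⊆_s A. -/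
open Finset

/-!
If `F ⊆ₛ A` with `|F| = k`, then `F ∩ A` is admissible and has at least `k - s` elements.
Extend it greedily to an admissible `k`-set `F'`: a set of fewer than `k` elements blocks at most
`r (k - 1) < n` elements of `[n]`. Then `F' \ (F ∩ A)` has at most `s` elements, so `F' ⊆ₛ A`.
-/

theorem subS.card_le_card_inter_add {α : Type*} [DecidableEq α] {s : ℕ} {F A : Finset α}
    (h : subS s F A) : F.card ≤ (F ∩ A).card + s := by
  obtain ⟨E, hE, hFE⟩ := h
  have hFA : F \ A ⊆ E := fun y hy => by
    by_contra hyE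
    exact (mem_sdiff.mp hy).2 (hFE (mem_sdiff.mpr ⟨(mem_sdiff.mp hy).1, hyE⟩))
  have := card_le_card hFA
  have := card_inter_add_card_sdiff F A
  omega

theorem subS_of_subset_of_card_sdiff_le {α : Type*} [DecidableEq α] {s : ℕ} {B F A : Finset α}
    (hBF : B ⊆ F) (hBA : B ⊆ A) (hcard : (F \ B).card ≤ s) : subS s F A :=
  ⟨F \ B, hcard, by rwa [Finset.sdiff_sdiff_eq_self hBF]⟩

theorem Adm.mono {P : Finset (Finset ℕ)} {A B : Finset ℕ} (hA : Adm P A) (hBA : B ⊆ A) :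
    Adm P B :=
  fun p hp => (card_le_card (inter_subset_inter_right hBA)).trans (hA p hp)

theorem Adm.insert {P : Finset (Finset ℕ)} {B : Finset ℕ} {x : ℕ} (hB : Adm P B)
    (hx : ∀ p ∈ P, x ∈ p → Disjoint B p) : Adm P (insert x B) := by
  intro p hp
  by_cases hxp : x ∈ p
  · rw [insert_inter_of_mem hxp, disjoint_iff_inter_eq_empty.mp (hx p hp hxp)]
    exact card_insert_le _ _
  · rw [insert_inter_of_notMem hxp]
    exact hB p hp

section Extension

variable {P : Finset (Finset ℕ)} {r : ℕ}

theorem card_filter_not_disjoint_le (hdisj : (P : Set (Finset ℕ)).PairwiseDisjoint id)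
    (B : Finset ℕ) : (P.filter (fun p => ¬ Disjoint B p)).card ≤ B.card :=
  card_le_card_of_forall_subsingleton (fun p b => b ∈ p)
    (fun p hp => by
      obtain ⟨b, hbB, hbp⟩ := not_disjoint_iff.mp (mem_filter.mp hp).2
      exact ⟨b, hbB, hbp⟩)
    (fun b _ p hp q hq => by
      by_contra hpq
      exact disjoint_left.mp (hdisj (mem_filter.mp hp.1).1 (mem_filter.mp hq.1).1 hpq) hp.2 hq.2)

/-- The elements that cannot be added to `B` keeping it admissible lie in the at most `|B|`
parts that `B` meets, so there are at most `r |B|` of them. -/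
theorem exists_adm_insert (hdisj : (P : Set (Finset ℕ)).PairwiseDisjoint id)
    (hPr : ∀ p ∈ P, p.card ≤ r) {U : Finset ℕ} (hU : U ⊆ P.sup id) {B : Finset ℕ}
    (hB : Adm P B) (hcard : r * B.card < U.card) :
    ∃ x ∈ U, x ∉ B ∧ Adm P (insert x B) := by
  set S := P.filter (fun p => ¬ Disjoint B p)
  have hS : (S.sup id).card < U.card :=
    calc (S.sup id).card ≤ ∑ p ∈ S, p.card := by
          rw [sup_eq_biUnion]; exact card_biUnion_le
      _ ≤ S.card * r := sum_le_card_nsmul _ _ _ fun p hp => hPr p (mem_filter.mp hp).1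
      _ ≤ B.card * r := Nat.mul_le_mul_right _ (card_filter_not_disjoint_le hdisj B)
      _ < U.card := by rwa [Nat.mul_comm]
  obtain ⟨x, hxU, hxS⟩ := not_subset.mp fun h => (card_le_card h).not_gt hS
  have hfree : ∀ p ∈ P, x ∈ p → Disjoint B p := fun p hp hxp => by
    by_contra hBp
    exact hxS (le_sup (f := id) (mem_filter.mpr ⟨hp, hBp⟩) hxp)
  refine ⟨x, hxU, fun hxB => ?_, hB.insert hfree⟩
  obtain ⟨p, hp, hxp⟩ := mem_sup.mp (hU hxU)
  exact disjoint_left.mp (hfree p hp hxp) hxB hxp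

theorem exists_adm_superset_card (hdisj : (P : Set (Finset ℕ)).PairwiseDisjoint id)
    (hPr : ∀ p ∈ P, p.card ≤ r) {U : Finset ℕ} (hU : U ⊆ P.sup id) {k : ℕ}
    (hk : r * (k - 1) < U.card) {B : Finset ℕ} (hBU : B ⊆ U) (hB : Adm P B)
    (hBk : B.card ≤ k) : ∃ F ⊇ B, F ⊆ U ∧ Adm P F ∧ F.card = k := by
  induction hm : k - B.card generalizing B with
  | zero => exact ⟨B, subset_rfl, hBU, hB, by omega⟩
  | succ m ih =>
    have hlt : r * B.card < U.card :=
      lt_of_le_of_lt (Nat.mul_le_mul_left r (by omega)) hk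
    obtain ⟨x, hxU, hxB, hxadm⟩ := exists_adm_insert hdisj hPr hU hB hlt
    have hcard := card_insert_of_notMem hxB
    obtain ⟨F, hBF, hFU, hF, hFk⟩ :=
      ih (insert_subset hxU hBU) hxadm (by omega) (by omega)
    exact ⟨F, (subset_insert x B).trans hBF, hFU, hF, hFk⟩

end Extension

theorem stmt7_general (n r k s : ℕ) (P : Finset (Finset ℕ)) (hn : r * (k - 1) + 1 ≤ n)
    (hP : IsPartition n P) (hPr : ∀ p ∈ P, p.card ≤ r) :
    ∀ A ⊆ Finset.Icc 1 n, Adm P A →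
      (∃ F ∈ kSubsets n k, subS s F A) →
      ∃ F' ∈ kSubsets n k, Adm P F' ∧ subS s F' A := by
  rintro A hA hAadm ⟨F, ⟨-, hFk⟩, hFA⟩
  obtain ⟨hdisj, hcover⟩ := hP
  have hBk : (F ∩ A).card ≤ k := hFk ▸ card_le_card inter_subset_left
  have hBs : k ≤ (F ∩ A).card + s := hFk ▸ hFA.card_le_card_inter_add
  obtain ⟨F', hBF', hF'n, hF'adm, hF'k⟩ :=
    exists_adm_superset_card (fun p hp q hq hpq => hdisj p hp q hq hpq) hPr hcover.ge
      (by rw [Nat.card_Icc]; omega) (inter_subset_right.trans hA)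
      (hAadm.mono inter_subset_right) hBk
  refine ⟨F', ⟨hF'n, hF'k⟩, hF'adm, subS_of_subset_of_card_sdiff_le hBF' inter_subset_right ?_⟩
  rw [card_sdiff_of_subset hBF', hF'k]
  omega

theorem stmt7 (n r k s : ℕ) (P : Finset (Finset ℕ)) (hn : r * (k - 1) + 1 ≤ n)
    (hs : s < k) (hP : IsPartition n P) (hPr : ∀ p ∈ P, p.card ≤ r) :
    ∀ A ⊆ Finset.Icc 1 n, Adm P A →
      (∃ F ∈ kSubsets n k, subS s F A) →
      ∃ F' ∈ kSubsets n k, Adm P F' ∧ subS s F' A :=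
  stmt7_general n r k s P hn hP hPr
end
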